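/- Let x be a real number with x ≥ 2 and let k be a positive integer. Define R : ℕ → ℝ → ℝ by R 0 x = x and R (j+1) x = √(2 + R j x) (real square roots), and set y = (x + √(x² − 4)) / 2. Then R k x = y^(1/2^k) + y^(−1/2^k), where real powers (Real.rpow) are used. -/

import Mathlib

open Filter Real

/-- `nyblomR j x = √(2 + √(2 + ⋯ + √(2 + x)))` with `j` square roots:
`nyblomR 0 x = x`, `nyblomR (j+1) x = √(2 + nyblomR j x)`. -/
noncomputable def nyblomR : ℕ → ℝ → ℝ
  | 0, x => x
  | j + 1, x => Real.sqrt (2 + nyblomR j x)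

/-! Writing `x = y + y⁻¹` with `y > 0`, one square root turns `u² + u⁻²` into `u + u⁻¹`, since
`2 + u² + u⁻² = (u + u⁻¹)²`; so `k` square roots replace `y` by `y ^ (1 / 2 ^ k)`. For `x ≥ 2`
the larger root `y = (x + √(x² - 4)) / 2` of `y² - x y + 1` is such a `y`. -/

theorem sqrt_two_add_sq_add_inv_sq {u : ℝ} (hu : 0 < u) :
    √(2 + (u ^ 2 + (u ^ 2)⁻¹)) = u + u⁻¹ := by
  rw [← Real.sqrt_sq (by positivity : 0 ≤ u + u⁻¹)]
  congr 1
  field_simp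
  ring

theorem nyblomR_eq_rpow_add_rpow_neg {x y : ℝ} (hy : 0 < y) (hxy : y + y⁻¹ = x) (k : ℕ) :
    nyblomR k x = y ^ ((1 : ℝ) / 2 ^ k) + y ^ (-((1 : ℝ) / 2 ^ k)) := by
  induction k with
  | zero => simpa [nyblomR, Real.rpow_neg_one] using hxy.symm
  | succ k ih =>
    set u := y ^ ((1 : ℝ) / 2 ^ (k + 1)) with hu
    have hu_sq : u ^ 2 = y ^ ((1 : ℝ) / 2 ^ k) := by
      rw [hu, ← Real.rpow_natCast, ← Real.rpow_mul hy.le]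
      congr 1
      rw [pow_succ]
      push_cast
      field_simp
    rw [nyblomR, ih, Real.rpow_neg hy.le, Real.rpow_neg hy.le, ← hu_sq, ← hu]
    exact sqrt_two_add_sq_add_inv_sq (Real.rpow_pos_of_pos hy _)

theorem add_sqrt_sq_sub_four_div_two_add_inv {x : ℝ} (hx : 2 ≤ x) :
    (x + √(x ^ 2 - 4)) / 2 + ((x + √(x ^ 2 - 4)) / 2)⁻¹ = x := by
  have hs : √(x ^ 2 - 4) ^ 2 = x ^ 2 - 4 := Real.sq_sqrt (by nlinarith)
  have hinv : ((x + √(x ^ 2 - 4)) / 2)⁻¹ = (x - √(x ^ 2 - 4)) / 2 :=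
    inv_eq_of_mul_eq_one_right (by linear_combination -hs / 4)
  rw [hinv]
  ring

theorem nyblom_nested_radical_plus_general (x : ℝ) (hx : 2 ≤ x) (k : ℕ) :
    nyblomR k x =
      ((x + Real.sqrt (x ^ 2 - 4)) / 2) ^ ((1 : ℝ) / 2 ^ k) +
        ((x + Real.sqrt (x ^ 2 - 4)) / 2) ^ (-(1 : ℝ) / 2 ^ k) := by
  have hy : 0 < (x + √(x ^ 2 - 4)) / 2 := by positivity
  rw [neg_div]
  exact nyblomR_eq_rpow_add_rpow_neg hy (add_sqrt_sq_sub_four_div_two_add_inv hx) k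

/-- Nyblom (2005), first identity: for `x ≥ 2` and `k ≥ 1`, with
`y = (x + √(x² − 4))/2`, the `k`-fold nested radical `√(2 + ⋯ + √(2 + x))`
equals `y^(1/2^k) + y^(−1/2^k)`. -/
theorem nyblom_nested_radical_plus (x : ℝ) (hx : 2 ≤ x) (k : ℕ) (hk : 0 < k) :
    nyblomR k x =
      ((x + Real.sqrt (x ^ 2 - 4)) / 2) ^ ((1 : ℝ) / 2 ^ k) +
        ((x + Real.sqrt (x ^ 2 - 4)) / 2) ^ (-(1 : ℝ) / 2 ^ k) :=
  nyblom_nested_radical_plus_general x hx k
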